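/- Let p_n = 1/n for n ≥ 2 and p_1 = 1/2, W_n independent Bernoulli(p_n), Y_n = (-1)^{W_1+...+W_n}, and S_N = Y_1 + ... + Y_N. Then S_N/N converges in distribution to the uniform distribution on [-1, 1] as N → ∞. -/

import Mathlib

/-!
Write `Y_n = ±1` for the coin and `S_N` for the walk. The pair `(S_N, Y_N)` is a Markov chain:
`S_{N+1} = S_N + Y_{N+1}`, and `Y_{N+1} = -Y_N` with probability `1/(N+1)`, independently of the
past. Its law is explicit: `P(S_N = N - 2k, Y_N = 1)` is `(2(N-k) - 1)/(2N(N-1))` for `0 < k < N`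
and `1/(2N)` for `k = 0`, and `P(S_N = N - 2k, Y_N = -1)` is the same with `k` replaced by `N - k`.
Summing over `Y_N`, the law of `S_N / N` is uniform on the grid `-1, -1 + 2/N, …, 1` except for
half weights at the two endpoints, so `E f(S_N / N)` is the trapezoidal sum of `f / 2` on
`[-1, 1]`, which tends to the integral for continuous `f`.
-/

open MeasureTheory ProbabilityTheory Finset Filter

open Set in
theorem abs_mul_sub_intervalIntegral_le {f : ℝ → ℝ} {u v t C : ℝ} (huv : u ≤ v)
    (hf : IntervalIntegrable f volume u v) (hC : ∀ x ∈ Icc u v, |f t - f x| ≤ C) :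
    |(v - u) * f t - ∫ x in u..v, f x| ≤ C * (v - u) := by
  have hconst : (v - u) * f t = ∫ _ in u..v, f t := by simp
  rw [hconst, ← intervalIntegral.integral_sub intervalIntegrable_const hf]
  simpa [abs_of_nonneg (sub_nonneg.2 huv)] using
    intervalIntegral.norm_integral_le_of_norm_le_const (f := fun x => f t - f x)
      fun x hx => hC x (Ioc_subset_Icc_self (uIoc_of_le huv ▸ hx))

theorem add_mul_div_mem_Icc {a b : ℝ} (hab : a ≤ b) {k N : ℕ} (hk : k ≤ N) :
    a + k * ((b - a) / N) ∈ Set.Icc a b := by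
  have h₀ : 0 ≤ (k : ℝ) / N := by positivity
  have h₁ : (k : ℝ) / N ≤ 1 := div_le_one_of_le₀ (by exact_mod_cast hk) N.cast_nonneg
  rw [mul_div_left_comm]
  constructor <;> nlinarith

open Set in
theorem intervalIntegral_eq_sum_range {f : ℝ → ℝ} {a b : ℝ} (hab : a ≤ b)
    (hf : IntervalIntegrable f volume a b) {N : ℕ} (hN : N ≠ 0) :
    ∫ x in a..b, f x
      = ∑ k ∈ range N, ∫ x in a + k * ((b - a) / N)..a + (k + 1) * ((b - a) / N), f x := by
  have hNpos : (0 : ℝ) < N := by positivity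
  have hmem : ∀ k ≤ N, a + k * ((b - a) / N) ∈ uIcc a b := fun k hk =>
    uIcc_of_le hab ▸ add_mul_div_mem_Icc hab hk
  have hsum := intervalIntegral.sum_integral_adjacent_intervals
    (a := fun k : ℕ => a + k * ((b - a) / N)) (n := N)
    fun k hk => hf.mono_set (uIcc_subset_uIcc (hmem k hk.le) (hmem (k + 1) hk))
  push_cast at hsum
  rw [hsum, zero_mul, add_zero, mul_div_cancel₀ _ hNpos.ne', add_sub_cancel]

open Set in
theorem tendsto_riemann_sum {f : ℝ → ℝ} {a b : ℝ} (hab : a ≤ b) (hf : ContinuousOn f (Icc a b))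
    (t : ℕ → ℕ → ℝ)
    (ht : ∀ N k : ℕ, k < N → t N k ∈ Icc (a + k * ((b - a) / N)) (a + (k + 1) * ((b - a) / N))) :
    Tendsto (fun N : ℕ => ∑ k ∈ range N, (b - a) / N * f (t N k)) atTop
      (nhds (∫ x in a..b, f x)) := by
  rw [Metric.tendsto_atTop]
  intro ε hε
  have hba : 0 < b - a + 1 := by linarith
  obtain ⟨δ, hδ, hfδ⟩ := Metric.uniformContinuousOn_iff_le.mp
    (isCompact_Icc.uniformContinuousOn_of_continuous hf) (ε / (b - a + 1)) (by positivity)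
  obtain ⟨N₀, hN₀⟩ := exists_nat_gt ((b - a) / δ)
  refine ⟨N₀ + 1, fun N hN => ?_⟩
  have hNpos : (0 : ℝ) < N := by exact_mod_cast (show 0 < N by omega)
  have hmesh : (b - a) / N ≤ δ := by
    rw [div_lt_iff₀ hδ] at hN₀
    rw [div_le_iff₀ hNpos]
    nlinarith [show (N₀ : ℝ) + 1 ≤ N by exact_mod_cast hN]
  rw [intervalIntegral_eq_sum_range hab (hf.intervalIntegrable_of_Icc hab) (N := N) (by omega),
    Real.dist_eq, ← sum_sub_distrib]
  refine (abs_sum_le_sum_abs _ _).trans_lt ?_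
  calc ∑ k ∈ range N, |(b - a) / N * f (t N k)
          - ∫ x in a + k * ((b - a) / N)..a + (k + 1) * ((b - a) / N), f x|
      ≤ ∑ _k ∈ range N, ε / (b - a + 1) * ((b - a) / N) := by
        refine sum_le_sum fun k hk => ?_
        have hk := mem_range.mp hk
        have hu := add_mul_div_mem_Icc hab hk.le
        have hv := add_mul_div_mem_Icc hab hk
        have htk := ht N k hk
        push_cast at hv
        have hle := htk.1.trans htk.2
        have hcell := abs_mul_sub_intervalIntegral_le (t := t N k) (C := ε / (b - a + 1)) hle
          ((hf.mono (Icc_subset_Icc hu.1 hv.2)).intervalIntegrable_of_Icc hle) fun y hy => by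
            rw [← Real.dist_eq]
            refine hfδ _ ⟨hu.1.trans htk.1, htk.2.trans hv.2⟩ _
              ⟨hu.1.trans hy.1, hy.2.trans hv.2⟩ ?_
            rw [Real.dist_eq, abs_sub_le_iff]
            constructor <;> nlinarith [hy.1, hy.2, htk.1, htk.2]
        rwa [show a + (k + 1) * ((b - a) / N) - (a + k * ((b - a) / N)) = (b - a) / N by ring]
          at hcell
    _ = (b - a) * (ε / (b - a + 1)) := by
        rw [sum_const, card_range, nsmul_eq_mul]; field_simp
    _ < ε := by
        rw [mul_div_assoc', div_lt_iff₀ hba]; nlinarith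

theorem sum_range_succ_ite_lt_add_ite_pos (c : ℕ → ℝ) (N : ℕ) :
    ∑ k ∈ range (N + 1), ((if k < N then 1 else 0) + (if 0 < k then 1 else 0)) * c k
      = ∑ k ∈ range N, c k + ∑ k ∈ range N, c (k + 1) := by
  simp only [add_mul, sum_add_distrib, ite_mul, one_mul, zero_mul]
  congr 1
  · rw [sum_range_succ, if_neg (lt_irrefl N), add_zero]
    exact sum_congr rfl fun k hk => if_pos (mem_range.mp hk)
  · rw [sum_range_succ', if_neg (lt_irrefl 0), add_zero]
    exact sum_congr rfl fun k _ => if_pos k.succ_pos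

open Set in
theorem tendsto_sum_trapezoid {f : ℝ → ℝ} (hf : ContinuousOn f (Icc (-1) 1)) :
    Tendsto (fun N : ℕ => ∑ k ∈ range (N + 1),
        ((if k < N then 1 else 0) + (if 0 < k then 1 else 0)) / (2 * N) * f ((N - 2 * k) / N))
      atTop (nhds ((∫ x in (-1)..1, f x) / 2)) := by
  have hg : ContinuousOn (fun x => f (-x)) (Icc (-1) 1) :=
    hf.comp continuousOn_neg fun x hx => ⟨by linarith [hx.2], by linarith [hx.1]⟩
  have hleft := tendsto_riemann_sum (by norm_num) hg (fun N k => -1 + k * ((1 - -1) / N))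
    fun N k _ => ⟨le_rfl, by gcongr; norm_num⟩
  have hright := tendsto_riemann_sum (by norm_num) hg (fun N k => -1 + (k + 1) * ((1 - -1) / N))
    fun N k _ => ⟨by gcongr; norm_num, le_rfl⟩
  have hint : ∫ x in (-1)..1, f (-x) = ∫ x in (-1)..1, f x := by
    simp [intervalIntegral.integral_comp_neg]
  rw [hint] at hleft hright
  -- The weighted sum is half the mean of the left and right Riemann sums of `x ↦ f (-x)`.
  have hmean := (hleft.add hright).div_const 4
  rw [show ∀ I : ℝ, (I + I) / 4 = I / 2 from fun I => by ring] at hmean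
  refine hmean.congr' ?_
  filter_upwards [eventually_ne_atTop 0] with N hN
  have hN : (N : ℝ) ≠ 0 := Nat.cast_ne_zero.mpr hN
  have hpt : ∀ j : ℝ, -(-1 + j * ((1 - -1) / N)) = (N - 2 * j) / N := fun j => by
    field_simp; ring
  set c : ℕ → ℝ := fun k => f ((N - 2 * k) / N)
  calc (∑ k ∈ range N, (1 - -1) / N * f (-(-1 + k * ((1 - -1) / N)))
        + ∑ k ∈ range N, (1 - -1) / N * f (-(-1 + (k + 1) * ((1 - -1) / N)))) / 4
      = (∑ k ∈ range N, c k + ∑ k ∈ range N, c (k + 1)) / (2 * N) := by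
        simp only [hpt, ← mul_sum, c]; push_cast; field_simp; ring
    _ = ∑ k ∈ range (N + 1),
          ((if k < N then 1 else 0) + (if 0 < k then 1 else 0)) / (2 * N) * c k := by
        rw [← sum_range_succ_ite_lt_add_ite_pos, sum_div]
        exact sum_congr rfl fun k _ => by ring

theorem integral_comp_eq_sum_of_mem {Ω α E : Type*} [MeasurableSpace Ω] [MeasurableSpace α]
    [MeasurableSingletonClass α] [NormedAddCommGroup E] [NormedSpace ℝ E] [CompleteSpace E]
    {μ : Measure Ω} [IsFiniteMeasure μ] {X : Ω → α} (hX : Measurable X) {s : Finset α}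
    (hs : ∀ ω, X ω ∈ s) (g : α → E) : ∫ ω, g (X ω) ∂μ = ∑ x ∈ s, μ.real (X ⁻¹' {x}) • g x := by
  have hsplit : (fun ω => g (X ω)) = fun ω => ∑ x ∈ s, (X ⁻¹' {x}).indicator (fun _ => g x) ω := by
    funext ω
    rw [sum_eq_single_of_mem (X ω) (hs ω) fun x _ hx =>
      Set.indicator_of_notMem (s := X ⁻¹' {x}) (Ne.symm hx) _,
      Set.indicator_of_mem (s := X ⁻¹' {X ω}) rfl]
  rw [hsplit, integral_finsetSum _ fun x _ => (integrable_const _).indicator (hX (.singleton x))]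
  exact sum_congr rfl fun x _ => integral_indicator_const _ (hX (.singleton x))

noncomputable def coinWeight (N : ℕ) (k : ℤ) : ℝ :=
  if k = 0 then 1 / (2 * N)
  else if 1 ≤ k ∧ k ≤ N - 1 then (2 * (N - k) - 1) / (2 * N * (N - 1))
  else 0

theorem coinWeight_zero (N : ℕ) : coinWeight N 0 = 1 / (2 * N) := if_pos rfl

theorem coinWeight_of_mem {N : ℕ} {k : ℤ} (h₁ : 1 ≤ k) (h₂ : k ≤ N - 1) :
    coinWeight N k = (2 * (N - k) - 1) / (2 * N * (N - 1)) := by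
  rw [coinWeight, if_neg (by omega), if_pos ⟨h₁, h₂⟩]

theorem coinWeight_of_neg {N : ℕ} {k : ℤ} (hk : k < 0) : coinWeight N k = 0 := by
  rw [coinWeight, if_neg (by omega), if_neg (by omega)]

theorem coinWeight_of_le {N : ℕ} {k : ℤ} (hk₀ : k ≠ 0) (hk : N ≤ k) : coinWeight N k = 0 := by
  rw [coinWeight, if_neg hk₀, if_neg (by omega)]

theorem coinWeight_one (k : ℤ) : coinWeight 1 k = if k = 0 then 1 / 2 else 0 := by
  unfold coinWeight
  split_ifs <;> norm_num

theorem coinWeight_succ {N : ℕ} (hN : 1 ≤ N) (k : ℤ) :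
    coinWeight (N + 1) k
      = (1 - 1 / (N + 1)) * coinWeight N k + 1 / (N + 1) * coinWeight N (N - k) := by
  have hN₀ : (N : ℝ) ≠ 0 := by exact_mod_cast (by omega : N ≠ 0)
  rcases lt_trichotomy k 0 with hk | rfl | hk
  · rw [coinWeight_of_neg hk, coinWeight_of_neg hk, coinWeight_of_le (by omega) (by omega)]
    ring
  · rw [coinWeight_zero, coinWeight_zero, sub_zero, coinWeight_of_le (by omega) le_rfl]
    push_cast; field_simp; ring
  rcases lt_trichotomy k N with hkN | rfl | hkN
  · have hk' : (N : ℝ) - 1 ≠ 0 := by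
      have : (1 : ℝ) ≤ k := by exact_mod_cast hk
      have : (k : ℝ) < N := by exact_mod_cast hkN
      linarith
    rw [coinWeight_of_mem hk (by push_cast; omega), coinWeight_of_mem hk (by omega),
      coinWeight_of_mem (by omega) (by omega)]
    push_cast [add_sub_cancel_right]; field_simp; ring
  · rw [coinWeight_of_mem hk (by push_cast; omega), coinWeight_of_le hk.ne' le_rfl, sub_self,
      coinWeight_zero]
    push_cast [add_sub_cancel_right]; field_simp; ring
  · rw [coinWeight_of_le hk.ne' (by push_cast; omega), coinWeight_of_le hk.ne' hkN.le,
      coinWeight_of_neg (by omega)]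
    ring

theorem coinWeight_add_coinWeight_sub {N : ℕ} (hN : 1 ≤ N) {k : ℕ} (hk : k ≤ N) :
    coinWeight N k + coinWeight N (N - k)
      = ((if k < N then 1 else 0) + (if 0 < k then 1 else 0)) / (2 * N) := by
  rcases Nat.eq_zero_or_pos k with rfl | hk₀
  · rw [if_pos (by omega : 0 < N), if_neg (lt_irrefl 0)]
    simp [coinWeight_zero, coinWeight_of_le (N := N) (k := N) (by omega) le_rfl]
  rcases hk.lt_or_eq with hkN | rfl
  · have : (N : ℝ) - 1 ≠ 0 := by
      have : (k : ℝ) < N := by exact_mod_cast hkN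
      have : (1 : ℝ) ≤ k := by exact_mod_cast hk₀
      linarith
    rw [if_pos hkN, if_pos hk₀, coinWeight_of_mem (by omega) (by omega),
      coinWeight_of_mem (by omega) (by omega)]
    push_cast; field_simp; ring
  · rw [if_neg (lt_irrefl k), if_pos hk₀, coinWeight_of_le (by omega) le_rfl, sub_self,
      coinWeight_zero]
    ring

section CoinTurning

variable {Ω : Type*}

def coinSign (W : ℕ → Ω → ℕ) (n : ℕ) (ω : Ω) : ℝ := (-1) ^ ∑ k ∈ Icc 1 n, W k ω

def coinWalk (W : ℕ → Ω → ℕ) (N : ℕ) (ω : Ω) : ℝ := ∑ n ∈ Icc 1 N, coinSign W n ω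

section Path

variable (W : ℕ → Ω → ℕ) (ω : Ω)

@[simp] theorem coinSign_zero : coinSign W 0 ω = 1 := by simp [coinSign]

@[simp] theorem coinWalk_zero : coinWalk W 0 ω = 0 := by simp [coinWalk]

theorem coinSign_succ (n : ℕ) : coinSign W (n + 1) ω = coinSign W n ω * (-1) ^ W (n + 1) ω := by
  rw [coinSign, coinSign, sum_Icc_succ_top (by omega), pow_add]

theorem coinWalk_succ (n : ℕ) : coinWalk W (n + 1) ω = coinWalk W n ω + coinSign W (n + 1) ω := by
  rw [coinWalk, coinWalk, sum_Icc_succ_top (by omega)]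

theorem coinSign_eq_one_or (n : ℕ) : coinSign W n ω = 1 ∨ coinSign W n ω = -1 :=
  neg_one_pow_eq_or ℝ _

theorem coinWalk_mem_image (N : ℕ) :
    coinWalk W N ω ∈ (range (N + 1)).image fun k : ℕ => (N : ℝ) - 2 * k := by
  induction N with
  | zero => simp
  | succ n ih =>
    obtain ⟨k, hk, hwalk⟩ := mem_image.mp ih
    have hk := mem_range.mp hk
    rw [coinWalk_succ, ← hwalk]
    rcases coinSign_eq_one_or W ω (n + 1) with h | h <;> rw [h]
    · exact mem_image.mpr ⟨k, mem_range.mpr (by omega), by push_cast; ring⟩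
    · exact mem_image.mpr ⟨k + 1, mem_range.mpr (by omega), by push_cast; ring⟩

end Path

section Measurability

variable {m : MeasurableSpace Ω} {W : ℕ → Ω → ℕ} {n : ℕ}

theorem measurable_coinSign (hW : ∀ k ≤ n, Measurable[m] (W k)) : Measurable[m] (coinSign W n) :=
  measurable_from_top.comp <| Finset.measurable_sum _ fun k hk => hW k (mem_Icc.mp hk).2

theorem measurable_coinWalk (hW : ∀ k ≤ n, Measurable[m] (W k)) : Measurable[m] (coinWalk W n) :=
  Finset.measurable_sum _ fun _ hj =>
    measurable_coinSign fun k hk => hW k (hk.trans (mem_Icc.mp hj).2)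

end Measurability

theorem indepFun_coinWalk_coinSign [MeasurableSpace Ω] {μ : Measure Ω} {W : ℕ → Ω → ℕ}
    (hW : ∀ k, Measurable (W k)) (hind : iIndepFun W μ) (n : ℕ) :
    IndepFun (fun ω => (coinWalk W n ω, coinSign W n ω)) (W (n + 1)) μ := by
  set past := ⨆ k ∈ Set.Iic n, MeasurableSpace.comap (W k) inferInstance
  have hpast : Measurable[past] fun ω => (coinWalk W n ω, coinSign W n ω) := by
    have hWk : ∀ k ≤ n, Measurable[past] (W k) := fun k hk =>
      (comap_measurable (W k)).mono
        (le_iSup₂ (f := fun k (_ : k ∈ Set.Iic n) => MeasurableSpace.comap (W k) _) k hk) le_rfl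
    exact (measurable_coinWalk hWk).prodMk (measurable_coinSign hWk)
  have hindep : Indep past (MeasurableSpace.comap (W (n + 1)) inferInstance) μ := by
    have := indep_iSup_of_disjoint (fun k => (hW k).comap_le) hind.iIndep
      (S := Set.Iic n) (T := {n + 1}) (by simp)
    rwa [_root_.iSup_singleton] at this
  rw [IndepFun_iff_Indep]
  exact indep_of_indep_of_le_left hindep hpast.comap_le

section Law

variable [MeasurableSpace Ω] (μ : Measure Ω) (W : ℕ → Ω → ℕ)

noncomputable def coinMass (N : ℕ) (s y : ℝ) : ℝ :=
  μ.real {ω | coinWalk W N ω = s ∧ coinSign W N ω = y}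

theorem coinMass_zero [IsProbabilityMeasure μ] (s y : ℝ) :
    coinMass μ W 0 s y = if s = 0 ∧ y = 1 then 1 else 0 := by
  split_ifs with h <;> simp [coinMass, h, eq_comm]

variable {μ W}

theorem coinMass_succ (hW : ∀ k, Measurable (W k)) (hWrange : ∀ k ω, W k ω = 0 ∨ W k ω = 1)
    (hind : iIndepFun W μ) (n : ℕ) (s y : ℝ) :
    coinMass μ W (n + 1) s y
      = μ.real {ω | W (n + 1) ω = 0} * coinMass μ W n (s - y) y
        + μ.real {ω | W (n + 1) ω = 1} * coinMass μ W n (s - y) (-y) := by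
  have := hind.isProbabilityMeasure
  set X := fun ω => (coinWalk W n ω, coinSign W n ω)
  have hX : Measurable X :=
    (measurable_coinWalk fun k _ => hW k).prodMk (measurable_coinSign fun k _ => hW k)
  have hsplit : {ω | coinWalk W (n + 1) ω = s ∧ coinSign W (n + 1) ω = y}
      = (X ⁻¹' {(s - y, y)} ∩ W (n + 1) ⁻¹' {0}) ∪ (X ⁻¹' {(s - y, -y)} ∩ W (n + 1) ⁻¹' {1}) := by
    ext ω
    simp only [Set.mem_ofPred_eq, Set.mem_union, Set.mem_inter_iff, Set.mem_preimage,
      Set.mem_singleton_iff, Prod.mk.injEq, X, coinWalk_succ, coinSign_succ]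
    rcases hWrange (n + 1) ω with h | h <;> rw [h] <;> grind
  have hindep := indepFun_coinWalk_coinSign hW hind n
  have hmul : ∀ (a : ℝ × ℝ) (i : ℕ),
      μ.real (X ⁻¹' {a} ∩ W (n + 1) ⁻¹' {i}) = μ.real (W (n + 1) ⁻¹' {i}) * μ.real (X ⁻¹' {a}) :=
    fun a i => by
      rw [measureReal_def, hindep.measure_inter_preimage_eq_mul _ _ (.singleton a) (.singleton i),
        ENNReal.toReal_mul, mul_comm]; rfl
  rw [coinMass, hsplit, measureReal_union ?_ ((hX (.singleton _)).inter (hW _ (.singleton _))),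
    hmul, hmul]
  · simp only [coinMass, X, Set.preimage, Set.mem_singleton_iff, Prod.mk.injEq]
  · exact Set.disjoint_left.mpr fun ω h₀ h₁ => zero_ne_one (h₀.2.symm.trans h₁.2)

theorem coinMass_eq_coinWeight (hW : ∀ k, Measurable (W k))
    (hWrange : ∀ k ω, W k ω = 0 ∨ W k ω = 1) (hind : iIndepFun W μ)
    (h₁ : μ.real {ω | W 1 ω = 1} = 1 / 2) (hn : ∀ n, 2 ≤ n → μ.real {ω | W n ω = 1} = 1 / n)
    {N : ℕ} (hN : 1 ≤ N) (k : ℤ) :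
    coinMass μ W N (N - 2 * k) 1 = coinWeight N k
      ∧ coinMass μ W N (N - 2 * k) (-1) = coinWeight N (N - k) := by
  have := hind.isProbabilityMeasure
  have hzero : ∀ n, μ.real {ω | W n ω = 0} = 1 - μ.real {ω | W n ω = 1} := fun n => by
    have hcompl : {ω | W n ω = 0} = {ω | W n ω = 1}ᶜ := by
      ext ω; rcases hWrange n ω with h | h <;> simp [h]
    rw [hcompl, measureReal_compl (s := {ω | W n ω = 1}) (hW n (.singleton 1)), probReal_univ]
  have hstep := coinMass_succ hW hWrange hind
  induction N, hN using Nat.le_induction generalizing k with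
  | base =>
    -- one step from the deterministic start `(S_0, Y_0) = (0, 1)`
    rw [hstep, hstep, hzero, h₁]
    simp only [coinMass_zero, coinWeight_one, Nat.cast_one]
    have hk : (1 - 2 * (k : ℝ) + 1 = 0) ↔ 1 - k = 0 := by
      rw [← Int.cast_inj (α := ℝ)]; push_cast; constructor <;> intro <;> linarith
    norm_num [hk]
  | succ n hn' ih =>
    have ha : μ.real {ω | W (n + 1) ω = 1} = 1 / (n + 1) := by
      rw [hn (n + 1) (by omega)]; push_cast; rfl
    rw [hstep, hstep, hzero, ha, coinWeight_succ hn', coinWeight_succ hn']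
    constructor
    · rw [show ((n + 1 : ℕ) : ℝ) - 2 * k - 1 = n - 2 * k by push_cast; ring, (ih k).1, (ih k).2]
    · rw [show ((n + 1 : ℕ) : ℝ) - 2 * k - -1 = n - 2 * ((k - 1 : ℤ) : ℝ) by push_cast; ring,
        neg_neg, (ih (k - 1)).1, (ih (k - 1)).2,
        show (n : ℤ) - ((n + 1 : ℕ) - k) = k - 1 by push_cast; ring,
        show (n : ℤ) - (k - 1) = (n + 1 : ℕ) - k by push_cast; ring]

theorem measureReal_coinWalk_eq (hW : ∀ k, Measurable (W k))
    (hWrange : ∀ k ω, W k ω = 0 ∨ W k ω = 1) (hind : iIndepFun W μ)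
    (h₁ : μ.real {ω | W 1 ω = 1} = 1 / 2) (hn : ∀ n, 2 ≤ n → μ.real {ω | W n ω = 1} = 1 / n)
    {N : ℕ} (hN : 1 ≤ N) {k : ℕ} (hk : k ≤ N) :
    μ.real {ω | coinWalk W N ω = N - 2 * k}
      = ((if k < N then 1 else 0) + (if 0 < k then 1 else 0)) / (2 * N) := by
  have := hind.isProbabilityMeasure
  have hsplit : {ω | coinWalk W N ω = N - 2 * k}
      = {ω | coinWalk W N ω = N - 2 * k ∧ coinSign W N ω = 1}
        ∪ {ω | coinWalk W N ω = N - 2 * k ∧ coinSign W N ω = -1} := by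
    ext ω
    rcases coinSign_eq_one_or W ω N with h | h <;> norm_num [h]
  have hdisj : Disjoint {ω | coinWalk W N ω = N - 2 * k ∧ coinSign W N ω = 1}
      {ω | coinWalk W N ω = N - 2 * k ∧ coinSign W N ω = -1} :=
    Set.disjoint_left.mpr fun ω h₁ h₂ => by norm_num [h₁.2] at h₂
  have hmeas : MeasurableSet {ω | coinWalk W N ω = N - 2 * k ∧ coinSign W N ω = -1} :=
    ((measurable_coinWalk fun k _ => hW k) (.singleton _)).inter
      ((measurable_coinSign fun k _ => hW k) (.singleton _))
  obtain ⟨hplus, hminus⟩ := coinMass_eq_coinWeight hW hWrange hind h₁ hn hN k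
  rw [Int.cast_natCast] at hplus hminus
  rw [hsplit, measureReal_union hdisj hmeas, ← coinMass, ← coinMass, hplus, hminus,
    coinWeight_add_coinWeight_sub hN hk]

theorem integral_comp_coinWalk (hW : ∀ k, Measurable (W k))
    (hWrange : ∀ k ω, W k ω = 0 ∨ W k ω = 1) (hind : iIndepFun W μ)
    (h₁ : μ.real {ω | W 1 ω = 1} = 1 / 2) (hn : ∀ n, 2 ≤ n → μ.real {ω | W n ω = 1} = 1 / n)
    (g : ℝ → ℝ) {N : ℕ} (hN : 1 ≤ N) :
    ∫ ω, g (coinWalk W N ω) ∂μ = ∑ k ∈ range (N + 1),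
      ((if k < N then 1 else 0) + (if 0 < k then 1 else 0)) / (2 * N) * g (N - 2 * k) := by
  have := hind.isProbabilityMeasure
  have hinj : Set.InjOn (fun k : ℕ => (N : ℝ) - 2 * k) (range (N + 1)) :=
    fun a _ b _ hab => by simpa using hab
  rw [integral_comp_eq_sum_of_mem (measurable_coinWalk fun k _ => hW k)
    (coinWalk_mem_image W · N), sum_image hinj]
  refine sum_congr rfl fun k hk => ?_
  rw [smul_eq_mul, ← measureReal_coinWalk_eq hW hWrange hind h₁ hn hN (mem_range_succ_iff.mp hk)]
  rfl

end Law

end CoinTurning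

theorem coin_turning_uniform_limit_general
    {Ω : Type*} [MeasurableSpace Ω] (μ : Measure Ω)
    (p : ℕ → ℝ) (hp1 : p 1 = 1 / 2) (hpn : ∀ n, 2 ≤ n → p n = 1 / n)
    (W : ℕ → Ω → ℕ) (hWmeas : ∀ k, Measurable (W k))
    (hWrange : ∀ k ω, W k ω = 0 ∨ W k ω = 1)
    (hWindep : iIndepFun W μ)
    (hWp : ∀ k, μ {ω | W k ω = 1} = ENNReal.ofReal (p k))
    (Y : ℕ → Ω → ℝ)
    (hY : ∀ n ω, Y n ω = (-1 : ℝ) ^ (∑ k ∈ Finset.Icc 1 n, W k ω))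
    (S : ℕ → Ω → ℝ) (hS : ∀ N ω, S N ω = ∑ n ∈ Finset.Icc 1 N, Y n ω) :
    ∀ f : BoundedContinuousFunction ℝ ℝ,
      Tendsto (fun N : ℕ => ∫ ω, f (S N ω / N) ∂μ) atTop
        (nhds (∫ x in Set.Icc (-1 : ℝ) 1, f x / 2)) := by
  intro f
  obtain rfl : Y = coinSign W := funext fun n => funext (hY n)
  obtain rfl : S = coinWalk W := funext fun N => funext (hS N)
  have h₁ : μ.real {ω | W 1 ω = 1} = 1 / 2 := by
    rw [measureReal_def, hWp, hp1, ENNReal.toReal_ofReal (by norm_num)]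
  have hn : ∀ n, 2 ≤ n → μ.real {ω | W n ω = 1} = 1 / n := fun n hn => by
    rw [measureReal_def, hWp, hpn n hn, ENNReal.toReal_ofReal (by positivity)]
  have hlimit : ∫ x in Set.Icc (-1 : ℝ) 1, f x / 2 = (∫ x in (-1)..1, f x) / 2 := by
    rw [integral_div, integral_Icc_eq_integral_Ioc, intervalIntegral.integral_of_le (by norm_num)]
  rw [hlimit]
  refine (tendsto_sum_trapezoid f.continuous.continuousOn).congr' ?_
  filter_upwards [eventually_ge_atTop 1] with N hN
  exact (integral_comp_coinWalk hWmeas hWrange hWindep h₁ hn (fun x => f (x / N)) hN).symm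

theorem coin_turning_uniform_limit
    {Ω : Type*} [MeasurableSpace Ω] (μ : Measure Ω) [IsProbabilityMeasure μ]
    (p : ℕ → ℝ) (hp1 : p 1 = 1 / 2) (hpn : ∀ n, 2 ≤ n → p n = 1 / n)
    (W : ℕ → Ω → ℕ) (hWmeas : ∀ k, Measurable (W k))
    (hWrange : ∀ k ω, W k ω = 0 ∨ W k ω = 1)
    (hWindep : iIndepFun W μ)
    (hWp : ∀ k, μ {ω | W k ω = 1} = ENNReal.ofReal (p k))
    (Y : ℕ → Ω → ℝ)
    (hY : ∀ n ω, Y n ω = (-1 : ℝ) ^ (∑ k ∈ Finset.Icc 1 n, W k ω))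
    (S : ℕ → Ω → ℝ) (hS : ∀ N ω, S N ω = ∑ n ∈ Finset.Icc 1 N, Y n ω) :
    ∀ f : BoundedContinuousFunction ℝ ℝ,
      Tendsto (fun N : ℕ => ∫ ω, f (S N ω / N) ∂μ) atTop
        (nhds (∫ x in Set.Icc (-1 : ℝ) 1, f x / 2)) :=
  coin_turning_uniform_limit_general μ p hp1 hpn W hWmeas hWrange hWindep hWp Y hY S hS
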